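/- Let 𝔤 be a complex Lie algebra equipped with a symmetric bilinear form B : 𝔤 × 𝔤 → ℂ which is invariant, i.e. B([x,y],z) + B(y,[x,z]) = 0 for all x, y, z ∈ 𝔤, and let ℓ⁰_r, ℓ¹_r, ℓ⁰_s, ℓ¹_s ∈ ℂ. On W = (𝔤 × 𝔤)³ define the bracket componentwise in each of the three factors by [(x,y),(x′,y′)] = ([x,x′], [x,y′] + [y,x′]), let V = (𝔤 × 𝔤)³ carry the componentwise action ρ((x,y))(u,v) = ([x,u], [x,v] + [y,u]) of W, and define the pairing ⟨⟨·,·⟩⟩_ω : W × V → ℂ by ⟨⟨((x_r,y_r),(x_s,y_s),(x_∞,y_∞)), ((u_r,v_r),(u_s,v_s),(u_∞,v_∞))⟩⟩_ω = ℓ⁰_r B(x_r,u_r) + ℓ¹_r (B(x_r,v_r) + B(y_r,u_r)) + ℓ⁰_s B(x_s,u_s) + ℓ¹_s (B(x_s,v_s) + B(y_s,u_s)) − (ℓ⁰_r + ℓ⁰_s) B(x_∞,u_∞) − B(x_∞,v_∞) − B(y_∞,u_∞). Then: (i) W with this bracket is a Lie algebra and ρ is an action of W on V by derivations of the abelian bracket,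 i.e. ρ([w,w′]) = ρ(w)ρ(w′) − ρ(w′)ρ(w); (ii) the subspace 𝔤◇ = ({0} × 𝔤) × (𝔤 × 𝔤) × ({0} × 𝔤) is a Lie subalgebra of W; (iii) the subspace 𝔥◇ = ({0} × 𝔤) × ({0} × {0}) × ({0} × 𝔤) of V satisfies ρ(𝔤◇)(𝔥◇) ⊆ 𝔥◇; (iv) the pairing ⟨⟨·,·⟩⟩_ω vanishes identically on 𝔤◇ × 𝔥◇ (isotropy); (v) if 𝔤 is finite-dimensional of dimension n, then dim 𝔤◇ = 4n = (2/3)·dim W and dim 𝔥◇ = 2n = (1/3)·dim V. -/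

import Mathlib

/-!
STATEMENT 9: The defect Lie algebra `W = (𝔤 ⋉ 𝔤_ab)³` and its module
`V = (𝔤_ab × 𝔤_ab)³` for the Ward-equation example, with componentwise bracket
`[(x,y),(x′,y′)] = ([x,x′], [x,y′] + [y,x′])`, componentwise action
`ρ((x,y))(u,v) = ([x,u], [x,v] + [y,u])` and defect pairing `⟨⟨·,·⟩⟩_ω` built from
the partial-fraction coefficients `ℓ⁰_r, ℓ¹_r, ℓ⁰_s, ℓ¹_s` of `ω`:
(i) `W` is a Lie algebra and `ρ` is an action by derivations of the abelian
bracket; (ii) `𝔤◇` is a Lie subalgebra of `W`; (iii) `ρ(𝔤◇)(𝔥◇) ⊆ 𝔥◇`;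
(iv) the pairing vanishes on `𝔤◇ × 𝔥◇`; (v) `dim 𝔤◇ = 4n = (2/3)·dim W` and
`dim 𝔥◇ = 2n = (1/3)·dim V` when `dim 𝔤 = n`.
-/

open Module

variable {𝔤 : Type*} [LieRing 𝔤] [LieAlgebra ℂ 𝔤]

/-- The 1-jet bracket `[(x,y),(x′,y′)] = ([x,x′], [x,y′] + [y,x′])` on `𝔤 × 𝔤`. -/
def jetBracket (u v : 𝔤 × 𝔤) : 𝔤 × 𝔤 :=
  (⁅u.1, v.1⁆, ⁅u.1, v.2⁆ + ⁅u.2, v.1⁆)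

/-- The bracket of `W = (𝔤 ⋉ 𝔤_ab)³`, componentwise in the three factors. -/
def wardBracket (u v : (𝔤 × 𝔤) × (𝔤 × 𝔤) × (𝔤 × 𝔤)) : (𝔤 × 𝔤) × (𝔤 × 𝔤) × (𝔤 × 𝔤) :=
  (jetBracket u.1 v.1, jetBracket u.2.1 v.2.1, jetBracket u.2.2 v.2.2)

/-- The componentwise action `ρ((x,y))(u,v) = ([x,u], [x,v] + [y,u])` of `W` on
`V = (𝔤_ab × 𝔤_ab)³`. -/
def wardAction (w v : (𝔤 × 𝔤) × (𝔤 × 𝔤) × (𝔤 × 𝔤)) : (𝔤 × 𝔤) × (𝔤 × 𝔤) × (𝔤 × 𝔤) :=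
  (jetBracket w.1 v.1, jetBracket w.2.1 v.2.1, jetBracket w.2.2 v.2.2)

/-- The defect pairing `⟨⟨·,·⟩⟩_ω : W × V → ℂ` of the Ward-equation example. -/
def wardPairing (B : 𝔤 →ₗ[ℂ] 𝔤 →ₗ[ℂ] ℂ) (l0r l1r l0s l1s : ℂ)
    (w v : (𝔤 × 𝔤) × (𝔤 × 𝔤) × (𝔤 × 𝔤)) : ℂ :=
  l0r * B w.1.1 v.1.1 + l1r * (B w.1.1 v.1.2 + B w.1.2 v.1.1) +
    l0s * B w.2.1.1 v.2.1.1 + l1s * (B w.2.1.1 v.2.1.2 + B w.2.1.2 v.2.1.1) -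
    (l0r + l0s) * B w.2.2.1 v.2.2.1 - B w.2.2.1 v.2.2.2 - B w.2.2.2 v.2.2.1

/-- The subspace `𝔤◇ = ({0} × 𝔤) × (𝔤 × 𝔤) × ({0} × 𝔤)` of `W`. -/
def wardGDiamond (𝔤 : Type*) [LieRing 𝔤] [LieAlgebra ℂ 𝔤] :
    Submodule ℂ ((𝔤 × 𝔤) × (𝔤 × 𝔤) × (𝔤 × 𝔤)) :=
  ((⊥ : Submodule ℂ 𝔤).prod ⊤).prod
    (((⊤ : Submodule ℂ 𝔤).prod ⊤).prod ((⊥ : Submodule ℂ 𝔤).prod ⊤))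

/-- The subspace `𝔥◇ = ({0} × 𝔤) × ({0} × {0}) × ({0} × 𝔤)` of `V`. -/
def wardHDiamond (𝔤 : Type*) [LieRing 𝔤] [LieAlgebra ℂ 𝔤] :
    Submodule ℂ ((𝔤 × 𝔤) × (𝔤 × 𝔤) × (𝔤 × 𝔤)) :=
  ((⊥ : Submodule ℂ 𝔤).prod ⊤).prod
    (((⊥ : Submodule ℂ 𝔤).prod ⊥).prod ((⊥ : Submodule ℂ 𝔤).prod ⊤))

lemma finrank_prod_submodule {M N : Type*} [AddCommGroup M] [Module ℂ M]
    [AddCommGroup N] [Module ℂ N] [FiniteDimensional ℂ M] [FiniteDimensional ℂ N]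
    (p : Submodule ℂ M) (q : Submodule ℂ N) :
    Module.finrank ℂ (p.prod q) = Module.finrank ℂ p + Module.finrank ℂ q := by
  have e : (p.prod q) ≃ₗ[ℂ] p × q :=
    { toFun := fun x => (⟨x.1.1, x.2.1⟩, ⟨x.1.2, x.2.2⟩)
      invFun := fun x => ⟨(x.1.1, x.2.1), ⟨x.1.2, x.2.2⟩⟩
      left_inv := fun x => rfl
      right_inv := fun x => rfl
      map_add' := fun x y => rfl
      map_smul' := fun c x => rfl }
  rw [e.finrank_eq, Module.finrank_prod]

theorem ward_defect_crossed_module_properties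
    (B : 𝔤 →ₗ[ℂ] 𝔤 →ₗ[ℂ] ℂ)
    (hBsymm : ∀ x y : 𝔤, B x y = B y x)
    (hBinv : ∀ x y z : 𝔤, B ⁅x, y⁆ z + B y ⁅x, z⁆ = 0)
    (l0r l1r l0s l1s : ℂ) :
    -- (i) `W` is a Lie algebra ...
    ((∀ u u' v : (𝔤 × 𝔤) × (𝔤 × 𝔤) × (𝔤 × 𝔤),
        wardBracket (u + u') v = wardBracket u v + wardBracket u' v) ∧
     (∀ u v v' : (𝔤 × 𝔤) × (𝔤 × 𝔤) × (𝔤 × 𝔤),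
        wardBracket u (v + v') = wardBracket u v + wardBracket u v') ∧
     (∀ (t : ℂ) (u v : (𝔤 × 𝔤) × (𝔤 × 𝔤) × (𝔤 × 𝔤)),
        wardBracket (t • u) v = t • wardBracket u v) ∧
     (∀ (t : ℂ) (u v : (𝔤 × 𝔤) × (𝔤 × 𝔤) × (𝔤 × 𝔤)),
        wardBracket u (t • v) = t • wardBracket u v) ∧
     (∀ u : (𝔤 × 𝔤) × (𝔤 × 𝔤) × (𝔤 × 𝔤), wardBracket u u = 0) ∧
     (∀ u v w : (𝔤 × 𝔤) × (𝔤 × 𝔤) × (𝔤 × 𝔤),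
        wardBracket u (wardBracket v w) =
          wardBracket (wardBracket u v) w + wardBracket v (wardBracket u w))) ∧
    -- ... and `ρ` is a linear action of `W` on `V` by derivations of the abelian
    -- bracket, i.e. `ρ([w,w′]) = ρ(w)ρ(w′) − ρ(w′)ρ(w)`
    ((∀ (w : (𝔤 × 𝔤) × (𝔤 × 𝔤) × (𝔤 × 𝔤)) (v v' : (𝔤 × 𝔤) × (𝔤 × 𝔤) × (𝔤 × 𝔤)),
        wardAction w (v + v') = wardAction w v + wardAction w v') ∧
     (∀ (w : (𝔤 × 𝔤) × (𝔤 × 𝔤) × (𝔤 × 𝔤)) (t : ℂ) (v : (𝔤 × 𝔤) × (𝔤 × 𝔤) × (𝔤 × 𝔤)),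
        wardAction w (t • v) = t • wardAction w v) ∧
     (∀ w w' v : (𝔤 × 𝔤) × (𝔤 × 𝔤) × (𝔤 × 𝔤),
        wardAction (wardBracket w w') v =
          wardAction w (wardAction w' v) - wardAction w' (wardAction w v))) ∧
    -- (ii) `𝔤◇` is a Lie subalgebra of `W`
    (∀ u v, u ∈ wardGDiamond 𝔤 → v ∈ wardGDiamond 𝔤 → wardBracket u v ∈ wardGDiamond 𝔤) ∧
    -- (iii) `ρ(𝔤◇)(𝔥◇) ⊆ 𝔥◇`
    (∀ w v, w ∈ wardGDiamond 𝔤 → v ∈ wardHDiamond 𝔤 → wardAction w v ∈ wardHDiamond 𝔤) ∧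
    -- (iv) isotropy: the pairing vanishes on `𝔤◇ × 𝔥◇`
    (∀ w v, w ∈ wardGDiamond 𝔤 → v ∈ wardHDiamond 𝔤 →
      wardPairing B l0r l1r l0s l1s w v = 0) ∧
    -- (v) dimensions: `dim 𝔤◇ = 4n = (2/3)·dim W`, `dim 𝔥◇ = 2n = (1/3)·dim V`
    (FiniteDimensional ℂ 𝔤 →
      (finrank ℂ (wardGDiamond 𝔤) = 4 * finrank ℂ 𝔤 ∧
       finrank ℂ (wardHDiamond 𝔤) = 2 * finrank ℂ 𝔤 ∧
       finrank ℂ ((𝔤 × 𝔤) × (𝔤 × 𝔤) × (𝔤 × 𝔤)) = 6 * finrank ℂ 𝔤 ∧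
       3 * finrank ℂ (wardGDiamond 𝔤) = 2 * finrank ℂ ((𝔤 × 𝔤) × (𝔤 × 𝔤) × (𝔤 × 𝔤)) ∧
       3 * finrank ℂ (wardHDiamond 𝔤) = finrank ℂ ((𝔤 × 𝔤) × (𝔤 × 𝔤) × (𝔤 × 𝔤)))) := by

  refine ⟨⟨?_, ?_, ?_, ?_, ?_, ?_⟩, ⟨?_, ?_, ?_⟩, ?_, ?_, ?_, ?_⟩
  · intro u u' v
    simp only [wardBracket, jetBracket, Prod.mk_add_mk, Prod.ext_iff, add_lie, Prod.fst_add, Prod.snd_add]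
    refine ⟨⟨?_, ?_⟩, ⟨?_, ?_⟩, ?_, ?_⟩ <;> first | trivial | abel
  · intro u v v'
    simp only [wardBracket, jetBracket, Prod.mk_add_mk, Prod.ext_iff, lie_add, Prod.fst_add, Prod.snd_add]
    refine ⟨⟨?_, ?_⟩, ⟨?_, ?_⟩, ?_, ?_⟩ <;> first | trivial | abel
  · intro t u v; simp [wardBracket, jetBracket, smul_lie, Prod.ext_iff, smul_add]
  · intro t u v; simp [wardBracket, jetBracket, lie_smul, Prod.ext_iff, smul_add]
  · intro u
    simp only [wardBracket, jetBracket, Prod.ext_iff, lie_self, Prod.fst_zero, Prod.snd_zero]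
    refine ⟨⟨?_, ?_⟩, ⟨?_, ?_⟩, ?_, ?_⟩ <;> first | trivial | (rw [← lie_skew, neg_add_cancel])
  · intro u v w
    simp only [wardBracket, jetBracket, Prod.mk_add_mk, Prod.ext_iff, lie_add, add_lie, lie_lie]
    refine ⟨⟨?_, ?_⟩, ⟨?_, ?_⟩, ?_, ?_⟩ <;> first | trivial | abel
  · intro w v v'
    simp only [wardAction, jetBracket, Prod.mk_add_mk, Prod.ext_iff, lie_add, Prod.fst_add, Prod.snd_add]
    refine ⟨⟨?_, ?_⟩, ⟨?_, ?_⟩, ?_, ?_⟩ <;> first | trivial | abel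
  · intro w t v; simp [wardAction, jetBracket, lie_smul, Prod.ext_iff, smul_add]
  · intro w w' v
    simp only [wardAction, wardBracket, jetBracket, Prod.mk_sub_mk, Prod.ext_iff, lie_add,
      add_lie, lie_lie]
    refine ⟨⟨?_, ?_⟩, ⟨?_, ?_⟩, ?_, ?_⟩ <;> first | trivial | abel
  · intro u v hu hv
    simp only [wardGDiamond, Submodule.mem_prod, Submodule.mem_bot, Submodule.mem_top,
      true_and, and_true] at hu hv ⊢
    simp [wardBracket, jetBracket, hu.1, hu.2, hv.1, hv.2]
  · intro w v hw hv
    simp only [wardGDiamond, wardHDiamond, Submodule.mem_prod, Submodule.mem_bot,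
      Submodule.mem_top, true_and, and_true] at hw hv ⊢
    simp [wardAction, jetBracket, hw.1, hw.2, hv.1, hv.2.1.1, hv.2.1.2, hv.2.2]
  · intro w v hw hv
    simp only [wardGDiamond, wardHDiamond, Submodule.mem_prod, Submodule.mem_bot,
      Submodule.mem_top, true_and, and_true] at hw hv
    simp [wardPairing, hw.1, hw.2, hv.1, hv.2.1.1, hv.2.1.2, hv.2.2]
  · intro _
    unfold wardGDiamond wardHDiamond
    simp only [wardGDiamond, wardHDiamond, finrank_prod_submodule, finrank_bot, finrank_top,
      Module.finrank_prod]
    omega
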